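/- Let s be an infinite volume ground state of the Hamiltonian H on ℤ², and σ* any fixed reference configuration. Then for any square box Λ of side L and any configuration σ_Λ on Λ, |H_Λ(σ_Λ | s) - H_Λ(σ_Λ | σ*)| ≤ 2(J + J_c)|∂Λ|, where |∂Λ| = 4L is the boundary size, J_c = Σ_{y₁>0, y₂∈ℤ} y₁/(y₁²+y₂²)^{p/2}, and p > 4. Consequently H_Λ(σ*_Λ | σ*) + 4(J+J_c)|∂Λ| ≥ H_Λ(s_Λ | σ*). -/

import Mathlib

/-- Euclidean norm of a point of `ℤ²`. -/
noncomputable def zNorm (x : ℤ × ℤ) : ℝ := Real.sqrt ((x.1 : ℝ) ^ 2 + (x.2 : ℝ) ^ 2)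

/-- `J_c = Σ_{y₁ > 0, y₂ ∈ ℤ} y₁/(y₁² + y₂²)^{p/2}`. -/
noncomputable def Jcrit (p : ℝ) : ℝ :=
  ∑' y : ℤ × ℤ, if 0 < y.1 then (y.1 : ℝ) / ((y.1 : ℝ) ^ 2 + (y.2 : ℝ) ^ 2) ^ (p / 2) else 0

/-- `H_X(σ_X | s)`: relative energy of the configuration equal to `σ` on the finite set
`X` and to the boundary condition `s` outside `X`, for the Hamiltonian
`H(σ) = -J Σ_{⟨x,y⟩}(σₓσ_y - 1) + Σ_{{x,y}} (σₓσ_y - 1)/|x-y|^p`. -/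
noncomputable def energyBC (p J : ℝ) (X : Finset (ℤ × ℤ)) (σ s : ℤ × ℤ → ℤ) : ℝ :=
  -J * ((1 / 2) * ∑ x ∈ X, ∑ y ∈ X,
      (if zNorm (x - y) = 1 then ((σ x * σ y : ℤ) : ℝ) - 1 else 0))
  + (1 / 2) * ∑ x ∈ X, ∑ y ∈ X,
      (if x = y then 0 else (((σ x * σ y : ℤ) : ℝ) - 1) / zNorm (x - y) ^ p)
  - J * ∑ x ∈ X, ∑' y : {y : ℤ × ℤ // y ∉ X},
      (if zNorm (x - (y : ℤ × ℤ)) = 1 then ((σ x * s (y : ℤ × ℤ) : ℤ) : ℝ) - 1 else 0)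
  + ∑ x ∈ X, ∑' y : {y : ℤ × ℤ // y ∉ X},
      (((σ x * s (y : ℤ × ℤ) : ℤ) : ℝ) - 1) / zNorm (x - (y : ℤ × ℤ)) ^ p

/-!
The energies of `σ` with boundary conditions `s` and `σ*` differ only through the couplings
between `Λ` and its complement, and each of these changes by at most twice its weight. The
complement of the box is covered by the four half-planes beyond its sides; summing the weight
of the bonds from the box into one half-plane gives at most `L` times the total weight of the
bonds crossing a unit segment of a lattice line, which is `1` for the nearest-neighbour
coupling and `J_c` for the coupling `|u|^{-p}`. The second claim compares both boundary
conditions against the ground-state inequality for `σ*` on `Λ`.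
-/

lemma zNorm_nonneg (v : ℤ × ℤ) : 0 ≤ zNorm v := Real.sqrt_nonneg _

lemma zNorm_neg (v : ℤ × ℤ) : zNorm (-v) = zNorm v := by simp [zNorm]

lemma zNorm_swap (v : ℤ × ℤ) : zNorm v.swap = zNorm v := by simp [zNorm, add_comm]

lemma abs_fst_le_zNorm (v : ℤ × ℤ) : |(v.1 : ℝ)| ≤ zNorm v :=
  Real.abs_le_sqrt (le_add_of_nonneg_right (sq_nonneg _))

lemma zNorm_rpow (v : ℤ × ℤ) (p : ℝ) :
    zNorm v ^ p = ((v.1 : ℝ) ^ 2 + (v.2 : ℝ) ^ 2) ^ (p / 2) := by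
  rw [zNorm, Real.sqrt_eq_rpow, ← Real.rpow_mul (by positivity)]
  ring_nf

lemma zNorm_eq_one_iff (v : ℤ × ℤ) :
    zNorm v = 1 ↔ v = (1, 0) ∨ v = (-1, 0) ∨ v = (0, 1) ∨ v = (0, -1) := by
  obtain ⟨a, b⟩ := v
  have hsq : zNorm (a, b) = 1 ↔ a ^ 2 + b ^ 2 = 1 := by
    rw [zNorm, Real.sqrt_eq_one]
    exact_mod_cast Iff.rfl
  rw [hsq]
  constructor
  · intro h
    have ha : -1 ≤ a ∧ a ≤ 1 := by constructor <;> nlinarith [sq_nonneg b]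
    have hb : -1 ≤ b ∧ b ≤ 1 := by constructor <;> nlinarith [sq_nonneg a]
    obtain ⟨ha₁, ha₂⟩ := ha
    obtain ⟨hb₁, hb₂⟩ := hb
    interval_cases a <;> interval_cases b <;> simp_all
  · rintro (h | h | h | h) <;> simp_all

lemma summable_inv_zNorm_rpow {q : ℝ} (hq : 2 < q) :
    Summable fun v : ℤ × ℤ => (zNorm v ^ q)⁻¹ := by
  have hsup := (EisensteinSeries.summable_one_div_norm_rpow hq).comp_injective
    (finTwoArrowEquiv ℤ).symm.injective
  refine hsup.of_nonneg_of_le (fun v => inv_nonneg.2 (Real.rpow_nonneg (zNorm_nonneg v) q))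
    fun v => ?_
  obtain rfl | hv := eq_or_ne v 0
  · simpa [zNorm, Real.zero_rpow (by linarith : q ≠ 0)] using Real.rpow_nonneg (norm_nonneg _) _
  have hle : ‖(finTwoArrowEquiv ℤ).symm v‖ ≤ zNorm v := by
    refine (pi_norm_le_iff_of_nonneg (zNorm_nonneg v)).2 fun i => ?_
    fin_cases i
    · simpa [Int.norm_eq_abs] using abs_fst_le_zNorm v
    · simpa [Int.norm_eq_abs, zNorm_swap] using abs_fst_le_zNorm v.swap
  have hpos : 0 < ‖(finTwoArrowEquiv ℤ).symm v‖ :=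
    norm_pos_iff.2 fun h => hv (by simpa [Prod.zero_eq_mk] using congrArg (finTwoArrowEquiv ℤ) h)
  rw [Function.comp_apply, Real.rpow_neg hpos.le]
  gcongr

lemma tsum_subtype_le_add_of_subset_union {α : Type*} {f : α → ℝ} (hf0 : 0 ≤ f)
    (hf : Summable f) {s t u : Set α} (hs : s ⊆ t ∪ u) :
    ∑' x : s, f x ≤ ∑' x : t, f x + ∑' x : u, f x := by
  rw [tsum_subtype, tsum_subtype, tsum_subtype, ← (hf.indicator t).tsum_add (hf.indicator u)]
  refine Summable.tsum_le_tsum (fun x => ?_) (hf.indicator s)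
    ((hf.indicator t).add (hf.indicator u))
  calc s.indicator f x ≤ (t ∪ u).indicator f x := Set.indicator_le_indicator_of_subset hs hf0 x
    _ ≤ (t ∪ u).indicator f x + (t ∩ u).indicator f x :=
      le_add_of_nonneg_right (Set.indicator_nonneg (fun y _ => hf0 y) x)
    _ = t.indicator f x + u.indicator f x := by
      rw [← Pi.add_apply, Set.indicator_union_add_inter, Pi.add_apply]

noncomputable section Weight

variable (w : ℤ × ℤ → ℝ)

def fstMomentTerm (u : ℤ × ℤ) : ℝ := if 0 < u.1 then (u.1 : ℝ) * w u else 0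

-- The total weight of the bonds `{y, y + u}` that cross a fixed unit segment of a vertical
-- lattice line: when `u.1 > 0`, exactly `u.1` translates of `u` do.
def fstMoment : ℝ := ∑' u, fstMomentTerm w u

def tailSum (k : ℤ) : ℝ := ∑' u : {u : ℤ × ℤ | k ≤ u.1}, w u

variable {w}

lemma sum_indicator_le_fstMomentTerm (hw0 : 0 ≤ w) (L : ℤ) (u : ℤ × ℤ) :
    ∑ k ∈ Finset.Icc 1 L, {v : ℤ × ℤ | k ≤ v.1}.indicator w u ≤ fstMomentTerm w u := by
  calc ∑ k ∈ Finset.Icc 1 L, {v : ℤ × ℤ | k ≤ v.1}.indicator w u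
      = ∑ k ∈ (Finset.Icc 1 L).filter (· ≤ u.1), w u := by
        simp only [Set.indicator_apply, Set.mem_ofPred_eq, Finset.sum_filter]
    _ ≤ ∑ k ∈ Finset.Icc 1 u.1, w u :=
        Finset.sum_le_sum_of_subset_of_nonneg
          (fun k hk => by simp only [Finset.mem_filter, Finset.mem_Icc] at hk ⊢; omega)
          (fun _ _ _ => hw0 u)
    _ = u.1.toNat * w u := by simp
    _ ≤ fstMomentTerm w u := by
        unfold fstMomentTerm
        split_ifs with hu
        · rw [show (u.1.toNat : ℝ) = u.1 by exact_mod_cast Int.toNat_of_nonneg hu.le]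
        · simp [Int.toNat_eq_zero.2 (not_lt.1 hu)]

lemma sum_tailSum_le_fstMoment (hw0 : 0 ≤ w) (hw : Summable w)
    (hm : Summable (fstMomentTerm w)) (L : ℤ) :
    ∑ k ∈ Finset.Icc 1 L, tailSum w k ≤ fstMoment w :=
  calc ∑ k ∈ Finset.Icc 1 L, tailSum w k
      = ∑' u, ∑ k ∈ Finset.Icc 1 L, {v : ℤ × ℤ | k ≤ v.1}.indicator w u := by
        rw [Summable.tsum_finsetSum fun k _ => hw.indicator _]
        exact Finset.sum_congr rfl fun k _ => tsum_subtype _ w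
    _ ≤ fstMoment w :=
        Summable.tsum_le_tsum (sum_indicator_le_fstMomentTerm hw0 L)
          (summable_sum fun k _ => hw.indicator _) hm

lemma tsum_subtype_eq_tailSum {x : ℤ × ℤ} {k : ℤ} {s : Set (ℤ × ℤ)} (e : ℤ × ℤ ≃ ℤ × ℤ)
    (he : ∀ y, w (e y) = w (x - y)) (hs : ∀ y, y ∈ s ↔ k ≤ (e y).1) :
    ∑' y : s, w (x - y) = tailSum w k := by
  let e' : s ≃ {u : ℤ × ℤ | k ≤ u.1} := e.subtypeEquiv hs
  rw [tailSum, ← e'.tsum_eq]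
  exact tsum_congr fun y => (he y).symm

lemma tsum_compl_box_le (hw0 : 0 ≤ w) (hw : Summable w) (hneg : ∀ u, w (-u) = w u)
    (hswap : ∀ u, w u.swap = w u) (L : ℤ) (x : ℤ × ℤ) :
    ∑' y : {y : ℤ × ℤ // y ∉ Finset.Icc (1, 1) (L, L)}, w (x - y)
      ≤ tailSum w x.1 + tailSum w (L + 1 - x.1) + tailSum w x.2 + tailSum w (L + 1 - x.2) := by
  have hf : Summable fun y => w (x - y) := (Equiv.subLeft x).summable_iff.2 hw
  have hf0 : 0 ≤ fun y => w (x - y) := fun y => hw0 (x - y)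
  have hcover : {y : ℤ × ℤ | y ∉ Finset.Icc (1, 1) (L, L)} ⊆
      ({y | y.1 ≤ 0} ∪ {y | L + 1 ≤ y.1}) ∪ ({y | y.2 ≤ 0} ∪ {y | L + 1 ≤ y.2}) := by
    intro y hy
    simp only [Set.mem_ofPred_eq, Finset.mem_Icc, Prod.le_def, Set.mem_union] at hy ⊢
    omega
  have hsub : ∀ y, w (y - x) = w (x - y) := fun y => by rw [← neg_sub, hneg]
  calc ∑' y : {y : ℤ × ℤ // y ∉ Finset.Icc (1, 1) (L, L)}, w (x - y)
      ≤ ∑' y : ↥({y : ℤ × ℤ | y.1 ≤ 0} ∪ {y | L + 1 ≤ y.1}), w (x - y)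
        + ∑' y : ↥({y : ℤ × ℤ | y.2 ≤ 0} ∪ {y | L + 1 ≤ y.2}), w (x - y) :=
        tsum_subtype_le_add_of_subset_union hf0 hf hcover
    _ ≤ (∑' y : {y : ℤ × ℤ | y.1 ≤ 0}, w (x - y) + ∑' y : {y : ℤ × ℤ | L + 1 ≤ y.1}, w (x - y))
        + (∑' y : {y : ℤ × ℤ | y.2 ≤ 0}, w (x - y)
          + ∑' y : {y : ℤ × ℤ | L + 1 ≤ y.2}, w (x - y)) :=
        add_le_add (tsum_subtype_le_add_of_subset_union hf0 hf subset_rfl)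
          (tsum_subtype_le_add_of_subset_union hf0 hf subset_rfl)
    _ = tailSum w x.1 + tailSum w (L + 1 - x.1) + tailSum w x.2 + tailSum w (L + 1 - x.2) := by
      rw [tsum_subtype_eq_tailSum (k := x.1) (Equiv.subLeft x) (fun y => rfl) (fun y => ?_),
        tsum_subtype_eq_tailSum (k := L + 1 - x.1) (Equiv.subRight x) hsub (fun y => ?_),
        tsum_subtype_eq_tailSum (k := x.2) ((Equiv.subLeft x).trans (Equiv.prodComm ℤ ℤ))
          (fun y => hswap _) (fun y => ?_),
        tsum_subtype_eq_tailSum (k := L + 1 - x.2) ((Equiv.subRight x).trans (Equiv.prodComm ℤ ℤ))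
          (fun y => (hswap _).trans (hsub y)) (fun y => ?_)]
      · ring
      all_goals simp only [Set.mem_ofPred_eq, Equiv.trans_apply, Equiv.subLeft_apply,
        Equiv.subRight_apply, Equiv.prodComm_apply, Prod.fst_swap, Prod.fst_sub, Prod.snd_sub]
      all_goals omega

lemma sum_box_sides (f : ℤ → ℝ) (L : ℕ) :
    ∑ x ∈ Finset.Icc ((1 : ℤ), (1 : ℤ)) ((L : ℤ), (L : ℤ)),
        (f x.1 + f (L + 1 - x.1) + f x.2 + f (L + 1 - x.2))
      = 4 * L * ∑ k ∈ Finset.Icc (1 : ℤ) L, f k := by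
  have hreflect : ∑ a ∈ Finset.Icc (1 : ℤ) L, f (L + 1 - a) = ∑ k ∈ Finset.Icc (1 : ℤ) L, f k :=
    Finset.sum_equiv (Equiv.subLeft ((L : ℤ) + 1))
      (fun a => by simp only [Finset.mem_Icc, Equiv.subLeft_apply]; omega) (fun _ _ => rfl)
  have hcard : ((Finset.Icc (1 : ℤ) L).card : ℝ) = L := by simp
  simp only [Finset.Icc_prod_def, Finset.sum_add_distrib, Finset.sum_product,
    Finset.sum_const, nsmul_eq_mul, hcard, ← Finset.mul_sum, hreflect]
  ring

lemma sum_tsum_compl_box_le (hw0 : 0 ≤ w) (hw : Summable w) (hneg : ∀ u, w (-u) = w u)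
    (hswap : ∀ u, w u.swap = w u) (hm : Summable (fstMomentTerm w)) (L : ℕ) :
    ∑ x ∈ Finset.Icc ((1 : ℤ), (1 : ℤ)) ((L : ℤ), (L : ℤ)),
        ∑' y : {y : ℤ × ℤ // y ∉ Finset.Icc ((1 : ℤ), (1 : ℤ)) ((L : ℤ), (L : ℤ))}, w (x - y)
      ≤ 4 * L * fstMoment w :=
  calc _ ≤ ∑ x ∈ Finset.Icc ((1 : ℤ), (1 : ℤ)) ((L : ℤ), (L : ℤ)),
        (tailSum w x.1 + tailSum w (L + 1 - x.1) + tailSum w x.2 + tailSum w (L + 1 - x.2)) :=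
        Finset.sum_le_sum fun x _ => tsum_compl_box_le hw0 hw hneg hswap L x
    _ = 4 * L * ∑ k ∈ Finset.Icc (1 : ℤ) L, tailSum w k := sum_box_sides _ L
    _ ≤ 4 * L * fstMoment w := by
        gcongr
        exact sum_tailSum_le_fstMoment hw0 hw hm L

end Weight

structure IsSymmetricCoupling (w : ℤ × ℤ → ℝ) : Prop where
  nonneg : 0 ≤ w
  summable : Summable w
  neg : ∀ u, w (-u) = w u
  swap : ∀ u, w u.swap = w u
  summable_fstMomentTerm : Summable (fstMomentTerm w)

noncomputable def boundaryCoupling (w : ℤ × ℤ → ℝ) (X : Finset (ℤ × ℤ)) (σ t : ℤ × ℤ → ℤ) :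
    ℝ :=
  ∑ x ∈ X, ∑' y : {y : ℤ × ℤ // y ∉ X}, w (x - y) * (((σ x * t y : ℤ) : ℝ) - 1)

lemma spin_mul_eq_one_or {σ t : ℤ × ℤ → ℤ} (hσ : ∀ x, σ x = 1 ∨ σ x = -1)
    (ht : ∀ x, t x = 1 ∨ t x = -1) (x y : ℤ × ℤ) : σ x * t y = 1 ∨ σ x * t y = -1 := by
  rcases hσ x with h | h <;> rcases ht y with h' | h' <;> simp [h, h']

section
variable {w : ℤ × ℤ → ℝ} {σ s t : ℤ × ℤ → ℤ}

lemma abs_boundaryCoupling_sub_le (hw0 : 0 ≤ w) (hw : Summable w)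
    (hσ : ∀ x, σ x = 1 ∨ σ x = -1) (hs : ∀ x, s x = 1 ∨ s x = -1)
    (ht : ∀ x, t x = 1 ∨ t x = -1) (X : Finset (ℤ × ℤ)) :
    |boundaryCoupling w X σ s - boundaryCoupling w X σ t|
      ≤ 2 * ∑ x ∈ X, ∑' y : {y : ℤ × ℤ // y ∉ X}, w (x - y) := by
  have hw' : ∀ x, Summable fun y : {y : ℤ × ℤ // y ∉ X} => w (x - y) :=
    fun x => ((Equiv.subLeft x).summable_iff.2 hw).subtype _
  have hsum : ∀ u : ℤ × ℤ → ℤ, (∀ x, u x = 1 ∨ u x = -1) → ∀ x,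
      Summable fun y : {y : ℤ × ℤ // y ∉ X} => w (x - y) * (((σ x * u y : ℤ) : ℝ) - 1) := by
    intro u hu x
    refine ((hw' x).mul_left 2).of_norm_bounded fun y => ?_
    rw [norm_mul, Real.norm_of_nonneg (hw0 _), mul_comm]
    refine mul_le_mul_of_nonneg_right ?_ (hw0 _)
    rcases spin_mul_eq_one_or hσ hu x y with h | h <;> norm_num [h]
  unfold boundaryCoupling
  rw [← Finset.sum_sub_distrib, Finset.mul_sum]
  refine (Finset.abs_sum_le_sum_abs _ _).trans (Finset.sum_le_sum fun x _ => ?_)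
  rw [← (hsum s hs x).tsum_sub (hsum t ht x), ← Real.norm_eq_abs]
  refine tsum_of_norm_bounded ((hw' x).hasSum.mul_left 2) fun y => ?_
  rw [← mul_sub, norm_mul, Real.norm_of_nonneg (hw0 _), mul_comm]
  refine mul_le_mul_of_nonneg_right ?_ (hw0 _)
  rcases spin_mul_eq_one_or hσ hs x y with h | h <;>
    rcases spin_mul_eq_one_or hσ ht x y with h' | h' <;> norm_num [h, h']

lemma abs_boundaryCoupling_sub_le_box (hw : IsSymmetricCoupling w)
    (hσ : ∀ x, σ x = 1 ∨ σ x = -1) (hs : ∀ x, s x = 1 ∨ s x = -1)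
    (ht : ∀ x, t x = 1 ∨ t x = -1) (L : ℕ) :
    |boundaryCoupling w (Finset.Icc ((1 : ℤ), (1 : ℤ)) ((L : ℤ), (L : ℤ))) σ s
        - boundaryCoupling w (Finset.Icc ((1 : ℤ), (1 : ℤ)) ((L : ℤ), (L : ℤ))) σ t|
      ≤ 2 * (4 * L * fstMoment w) :=
  (abs_boundaryCoupling_sub_le hw.nonneg hw.summable hσ hs ht _).trans <|
    mul_le_mul_of_nonneg_left
      (sum_tsum_compl_box_le hw.nonneg hw.summable hw.neg hw.swap hw.summable_fstMomentTerm L)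
      zero_le_two

end

noncomputable def nnWeight (u : ℤ × ℤ) : ℝ := if zNorm u = 1 then 1 else 0

noncomputable def powWeight (p : ℝ) (u : ℤ × ℤ) : ℝ := (zNorm u ^ p)⁻¹

lemma powWeight_nonneg (p : ℝ) (u : ℤ × ℤ) : 0 ≤ powWeight p u :=
  inv_nonneg.2 (Real.rpow_nonneg (zNorm_nonneg u) p)

lemma fstMomentTerm_nnWeight : fstMomentTerm nnWeight = fun u => if u = (1, 0) then 1 else 0 := by
  funext u
  by_cases hu : zNorm u = 1
  · rcases (zNorm_eq_one_iff u).1 hu with rfl | rfl | rfl | rfl <;>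
      simp [fstMomentTerm, nnWeight, hu]
  · have : u ≠ (1, 0) := fun h => hu ((zNorm_eq_one_iff u).2 (Or.inl h))
    simp [fstMomentTerm, nnWeight, hu, this]

lemma fstMoment_nnWeight : fstMoment nnWeight = 1 := by
  rw [fstMoment, fstMomentTerm_nnWeight, tsum_ite_eq]

lemma isSymmetricCoupling_nnWeight : IsSymmetricCoupling nnWeight where
  nonneg u := by unfold nnWeight; split_ifs <;> norm_num
  summable := by
    refine summable_of_ne_finset_zero (s := {(1, 0), (-1, 0), (0, 1), (0, -1)}) fun u hu => ?_
    rw [nnWeight, if_neg]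
    simpa [zNorm_eq_one_iff] using hu
  neg u := by simp [nnWeight, zNorm_neg]
  swap u := by simp [nnWeight, zNorm_swap]
  summable_fstMomentTerm := by
    rw [fstMomentTerm_nnWeight]
    exact (hasSum_ite_eq _ _).summable

lemma fstMoment_powWeight (p : ℝ) : fstMoment (powWeight p) = Jcrit p := by
  refine tsum_congr fun u => ?_
  simp only [fstMomentTerm, powWeight, zNorm_rpow, div_eq_mul_inv]

lemma fstMomentTerm_powWeight_le (p : ℝ) (u : ℤ × ℤ) :
    fstMomentTerm (powWeight p) u ≤ powWeight (p - 1) u := by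
  unfold fstMomentTerm
  split_ifs with hu
  · have hfst : (u.1 : ℝ) ≤ zNorm u := (le_abs_self _).trans (abs_fst_le_zNorm u)
    have hz : 0 < zNorm u := lt_of_lt_of_le (by exact_mod_cast hu) hfst
    calc (u.1 : ℝ) * powWeight p u ≤ zNorm u * (zNorm u ^ p)⁻¹ := by
          unfold powWeight
          gcongr
      _ = powWeight (p - 1) u := by
          rw [powWeight, Real.rpow_sub_one hz.ne', inv_div, div_eq_mul_inv]
  · exact powWeight_nonneg _ u

lemma isSymmetricCoupling_powWeight {p : ℝ} (hp : 3 < p) : IsSymmetricCoupling (powWeight p) where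
  nonneg := powWeight_nonneg p
  summable := summable_inv_zNorm_rpow (by linarith)
  neg u := by simp [powWeight, zNorm_neg]
  swap u := by simp [powWeight, zNorm_swap]
  summable_fstMomentTerm := by
    refine (summable_inv_zNorm_rpow (by linarith : 2 < p - 1)).of_nonneg_of_le (fun u => ?_)
      (fstMomentTerm_powWeight_le p)
    unfold fstMomentTerm
    split_ifs with hu
    · exact mul_nonneg (by exact_mod_cast hu.le) (powWeight_nonneg p u)
    · exact le_rfl

lemma energyBC_sub_energyBC (p J : ℝ) (X : Finset (ℤ × ℤ)) (σ s t : ℤ × ℤ → ℤ) :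
    energyBC p J X σ s - energyBC p J X σ t
      = -J * (boundaryCoupling nnWeight X σ s - boundaryCoupling nnWeight X σ t)
        + (boundaryCoupling (powWeight p) X σ s - boundaryCoupling (powWeight p) X σ t) := by
  have hnn : ∀ u : ℤ × ℤ → ℤ, (∑ x ∈ X, ∑' y : {y : ℤ × ℤ // y ∉ X},
      if zNorm (x - y) = 1 then ((σ x * u y : ℤ) : ℝ) - 1 else 0)
        = boundaryCoupling nnWeight X σ u := by
    intro u
    simp only [boundaryCoupling, nnWeight, ite_mul, one_mul, zero_mul]
  have hpow : ∀ u : ℤ × ℤ → ℤ, (∑ x ∈ X, ∑' y : {y : ℤ × ℤ // y ∉ X},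
      (((σ x * u y : ℤ) : ℝ) - 1) / zNorm (x - y) ^ p)
        = boundaryCoupling (powWeight p) X σ u := by
    intro u
    simp only [boundaryCoupling, powWeight, div_eq_inv_mul]
  rw [energyBC, energyBC, hnn, hnn, hpow, hpow]
  ring

theorem boundary_condition_change_general (p J : ℝ) (hp : 4 < p) (hJ : 0 < J)
    (s σstar : ℤ × ℤ → ℤ)
    (hs : ∀ x, s x = 1 ∨ s x = -1) (hσstar : ∀ x, σstar x = 1 ∨ σstar x = -1)
    (hground : ∀ (X : Finset (ℤ × ℤ)) (σ : ℤ × ℤ → ℤ), (∀ x, σ x = 1 ∨ σ x = -1) →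
        energyBC p J X s s ≤ energyBC p J X σ s)
    (L : ℕ)
    (Λ : Finset (ℤ × ℤ)) (hΛ : Λ = Finset.Icc ((1 : ℤ), (1 : ℤ)) ((L : ℤ), (L : ℤ))) :
    (∀ σ : ℤ × ℤ → ℤ, (∀ x, σ x = 1 ∨ σ x = -1) →
        |energyBC p J Λ σ s - energyBC p J Λ σ σstar| ≤ 2 * (J + Jcrit p) * (4 * (L : ℝ))) ∧
    energyBC p J Λ s σstar
      ≤ energyBC p J Λ σstar σstar + 4 * (J + Jcrit p) * (4 * (L : ℝ)) := by
  have hbound : ∀ σ : ℤ × ℤ → ℤ, (∀ x, σ x = 1 ∨ σ x = -1) →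
      |energyBC p J Λ σ s - energyBC p J Λ σ σstar| ≤ 2 * (J + Jcrit p) * (4 * (L : ℝ)) := by
    intro σ hσ
    have hnn := abs_boundaryCoupling_sub_le_box isSymmetricCoupling_nnWeight hσ hs hσstar L
    have hpow := abs_boundaryCoupling_sub_le_box
      (isSymmetricCoupling_powWeight (by linarith : 3 < p)) hσ hs hσstar L
    rw [fstMoment_nnWeight] at hnn
    rw [fstMoment_powWeight] at hpow
    rw [hΛ, energyBC_sub_energyBC]
    refine (abs_add_le _ _).trans ?_
    rw [abs_mul, abs_neg, abs_of_pos hJ]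
    have hJnn := mul_le_mul_of_nonneg_left hnn hJ.le
    linarith
  refine ⟨hbound, ?_⟩
  linarith [abs_le.1 (hbound s hs), abs_le.1 (hbound σstar hσstar), hground Λ σstar hσstar]

/-- changing the boundary condition from a ground state `s` to a reference
configuration `σ*` changes the energy in a box `Λ` of side `L` by at most
`2(J + J_c)|∂Λ|` with `|∂Λ| = 4L`; consequently
`H_Λ(σ*_Λ | σ*) + 4(J + J_c)|∂Λ| ≥ H_Λ(s_Λ | σ*)`. -/
theorem boundary_condition_change (p J : ℝ) (hp : 4 < p) (hJ : 0 < J)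
    (s σstar : ℤ × ℤ → ℤ)
    (hs : ∀ x, s x = 1 ∨ s x = -1) (hσstar : ∀ x, σstar x = 1 ∨ σstar x = -1)
    (hground : ∀ (X : Finset (ℤ × ℤ)) (σ : ℤ × ℤ → ℤ), (∀ x, σ x = 1 ∨ σ x = -1) →
        energyBC p J X s s ≤ energyBC p J X σ s)
    (L : ℕ) (hL : 0 < L)
    (Λ : Finset (ℤ × ℤ)) (hΛ : Λ = Finset.Icc ((1 : ℤ), (1 : ℤ)) ((L : ℤ), (L : ℤ))) :
    (∀ σ : ℤ × ℤ → ℤ, (∀ x, σ x = 1 ∨ σ x = -1) →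
        |energyBC p J Λ σ s - energyBC p J Λ σ σstar| ≤ 2 * (J + Jcrit p) * (4 * (L : ℝ))) ∧
    energyBC p J Λ s σstar
      ≤ energyBC p J Λ σstar σstar + 4 * (J + Jcrit p) * (4 * (L : ℝ)) :=
  boundary_condition_change_general p J hp hJ s σstar hs hσstar hground L Λ hΛ
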